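/- arXiv:1009.3896 — 6 statements merged into one kernel-verified Lean document; each statement's English description precedes it below -/
import Mathlib

section
/- If f : ℝ → ℝ is nonnegative and differentiable with H-Lipschitz derivative (H ≥ 0), then for every t, |f'(t)| ≤ √(4 H f(t)). -/
theorem smooth_self_bounding_deriv
    (f f' : ℝ → ℝ) (H : ℝ) (hH : 0 ≤ H)
    (hderiv : ∀ t, HasDerivAt f (f' t) t)
    (hnn : ∀ t, 0 ≤ f t)
    (hlip : ∀ t s, |f' t - f' s| ≤ H * |t - s|) :
    ∀ t, |f' t| ≤ Real.sqrt (4 * H * f t) := by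
  intro t
  have key : ∀ d : ℝ, 0 ≤ H * (d * d) + f' t * d + f t := by
    intro d
    set s := t + d with hs
    have hconv : Convex ℝ (segment ℝ t s) := convex_segment _ _
    have bound : ‖(f s - f' t * s) - (f t - f' t * t)‖ ≤ (H * |d|) * ‖s - t‖ := by
      refine hconv.norm_image_sub_le_of_norm_hasDerivWithin_le
        (f := fun u => f u - f' t * u) (f' := fun u => f' u - f' t * 1)
        (fun u _ => ((hderiv u).sub ((hasDerivAt_id u).const_mul (f' t))).hasDerivWithinAt)
        ?_ (left_mem_segment ℝ t s) (right_mem_segment ℝ t s)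
      intro u hu
      rw [segment_eq_image'] at hu
      obtain ⟨θ, hθ, rfl⟩ := hu
      simp only [smul_eq_mul]
      have : t + θ * (s - t) - t = θ * d := by rw [hs]; ring
      calc ‖f' (t + θ * (s - t)) - f' t * 1‖
          ≤ H * |t + θ * (s - t) - t| := by
            rw [mul_one]; exact hlip _ _
        _ = H * (θ * |d|) := by rw [this, abs_mul, abs_of_nonneg hθ.1]
        _ ≤ H * (1 * |d|) := by
            apply mul_le_mul_of_nonneg_left _ hH
            exact mul_le_mul_of_nonneg_right hθ.2 (abs_nonneg d)
        _ = H * |d| := by ring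
    have hst : s - t = d := by rw [hs]; ring
    rw [hst] at bound
    have h1 : |f s - f t - f' t * d| ≤ H * d ^ 2 := by
      have : (f s - f' t * s) - (f t - f' t * t) = f s - f t - f' t * d := by
        rw [hs]; ring
      rw [this] at bound
      calc |f s - f t - f' t * d| ≤ H * |d| * |d| := bound
        _ = H * d ^ 2 := by rw [mul_assoc, ← abs_mul, ← sq, abs_sq]
    have h2 := abs_le.mp h1
    have := hnn s
    nlinarith [h2.1]
  have hdisc : discrim H (f' t) (f t) ≤ 0 := discrim_le_zero key
  rw [discrim] at hdisc
  have hsq : f' t ^ 2 ≤ 4 * H * f t := by nlinarith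
  calc |f' t| = Real.sqrt (f' t ^ 2) := (Real.sqrt_sq_eq_abs _).symm
    _ ≤ Real.sqrt (4 * H * f t) := Real.sqrt_le_sqrt hsq
end

section
/- If f : ℝ → ℝ is nonnegative and differentiable with H-Lipschitz derivative, then for all t, r ∈ ℝ, (f(t) - f(r))² ≤ 6 H (f(t) + f(r)) (t - r)². -/
/-!
The descent lemma `f y ≤ f x + f' x * (y - x) + H / 2 * (y - x) ^ 2` and `f ≥ 0` give
`f' x ^ 2 ≤ 2 * H * f x`, so `√f` is `√(H / 2)`-Lipschitz. Hence
`(f t - f r) ^ 2 = (√(f t) - √(f r)) ^ 2 * (√(f t) + √(f r)) ^ 2 ≤ H / 2 * (t - r) ^ 2 * 2 * (f t + f r)`,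
which is even the bound with constant `1` in place of `6`.
-/

open Real Set

section

variable {f f' : ℝ → ℝ} {H : ℝ}

theorem le_add_deriv_mul_add_half_mul_sq (hderiv : ∀ t, HasDerivAt f (f' t) t)
    (hlip : ∀ t s, |f' t - f' s| ≤ H * |t - s|) (x y : ℝ) :
    f y ≤ f x + f' x * (y - x) + H / 2 * (y - x) ^ 2 := by
  set g : ℝ → ℝ := fun z ↦ f z - f' x * (z - x) - H / 2 * (z - x) ^ 2
  have hg : ∀ z, HasDerivAt g (f' z - f' x - H * (z - x)) z := fun z ↦ by
    refine (((hderiv z).sub (((hasDerivAt_id z).sub_const x).const_mul (f' x))).sub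
      ((((hasDerivAt_id z).sub_const x).pow 2).const_mul (H / 2))).congr_deriv ?_
    simp only [id, Nat.cast_ofNat]; ring
  have hg_cont : Continuous g := continuous_iff_continuousAt.2 fun z ↦ (hg z).continuousAt
  -- `g' ≤ 0` to the right of `x` and `g' ≥ 0` to its left, so `g` peaks at `x`
  suffices g y ≤ g x by simp only [g, sub_self, mul_zero] at this; nlinarith
  rcases le_total x y with hxy | hyx
  · refine antitoneOn_of_hasDerivWithinAt_nonpos (convex_Ici x) hg_cont.continuousOn
      (fun z _ ↦ (hg z).hasDerivWithinAt) (fun z hz ↦ ?_) self_mem_Ici hxy hxy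
    rw [interior_Ici] at hz
    have := (abs_le.1 (hlip z x)).2
    rw [abs_of_pos (sub_pos.2 hz)] at this
    linarith
  · refine monotoneOn_of_hasDerivWithinAt_nonneg (convex_Iic x) hg_cont.continuousOn
      (fun z _ ↦ (hg z).hasDerivWithinAt) (fun z hz ↦ ?_) hyx self_mem_Iic hyx
    rw [interior_Iic] at hz
    have := (abs_le.1 (hlip z x)).1
    rw [abs_of_neg (sub_neg.2 hz)] at this
    linarith

theorem sq_deriv_le_two_mul_mul (hH : 0 ≤ H) (hderiv : ∀ t, HasDerivAt f (f' t) t)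
    (hnn : ∀ t, 0 ≤ f t) (hlip : ∀ t s, |f' t - f' s| ≤ H * |t - s|) (x : ℝ) :
    f' x ^ 2 ≤ 2 * H * f x := by
  -- nonnegativity of `f` along the descent direction `x - s f'(x)` is a quadratic in `s`
  have hquad : ∀ s, 0 ≤ (H / 2 * f' x ^ 2) * (s * s) + (-f' x ^ 2) * s + f x := fun s ↦ by
    have := le_add_deriv_mul_add_half_mul_sq hderiv hlip x (x - s * f' x)
    nlinarith [hnn (x - s * f' x)]
  have hdisc := discrim_le_zero hquad
  rw [discrim] at hdisc
  rcases eq_or_ne (f' x) 0 with h0 | h0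
  · rw [h0]; nlinarith [hnn x]
  · have : 0 < f' x ^ 2 := by positivity
    nlinarith

theorem sqrt_le_sqrt_add_mul_abs (hH : 0 ≤ H) (hderiv : ∀ t, HasDerivAt f (f' t) t)
    (hnn : ∀ t, 0 ≤ f t) (hlip : ∀ t s, |f' t - f' s| ≤ H * |t - s|) (x y : ℝ) :
    √(f x) ≤ √(f y) + √(H / 2) * |x - y| := by
  have hslope : |f' y| ≤ 2 * √(H / 2) * √(f y) := by
    refine abs_le_of_sq_le_sq ?_ (by positivity)
    rw [mul_pow, mul_pow, sq_sqrt (by positivity), sq_sqrt (hnn y)]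
    linarith [sq_deriv_le_two_mul_mul hH hderiv hnn hlip y]
  refine sqrt_le_iff.2 ⟨by positivity, ?_⟩
  calc f x ≤ f y + f' y * (x - y) + H / 2 * (x - y) ^ 2 :=
        le_add_deriv_mul_add_half_mul_sq hderiv hlip y x
    _ ≤ f y + |f' y| * |x - y| + H / 2 * |x - y| ^ 2 := by
        rw [sq_abs, ← abs_mul]; gcongr; exact le_abs_self _
    _ ≤ (√(f y) + √(H / 2) * |x - y|) ^ 2 := by
        have := sq_sqrt (hnn y); have := sq_sqrt (div_nonneg hH zero_le_two)
        nlinarith [mul_le_mul_of_nonneg_right hslope (abs_nonneg (x - y))]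

theorem abs_sqrt_sub_sqrt_le (hH : 0 ≤ H) (hderiv : ∀ t, HasDerivAt f (f' t) t)
    (hnn : ∀ t, 0 ≤ f t) (hlip : ∀ t s, |f' t - f' s| ≤ H * |t - s|) (x y : ℝ) :
    |√(f x) - √(f y)| ≤ √(H / 2) * |x - y| := by
  have hxy := sqrt_le_sqrt_add_mul_abs hH hderiv hnn hlip x y
  have hyx := sqrt_le_sqrt_add_mul_abs hH hderiv hnn hlip y x
  rw [abs_sub_comm y x] at hyx
  exact abs_sub_le_iff.2 ⟨by linarith, by linarith⟩

theorem sq_sub_le_mul_add_mul_sq (hH : 0 ≤ H) (hderiv : ∀ t, HasDerivAt f (f' t) t)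
    (hnn : ∀ t, 0 ≤ f t) (hlip : ∀ t s, |f' t - f' s| ≤ H * |t - s|) (t r : ℝ) :
    (f t - f r) ^ 2 ≤ H * (f t + f r) * (t - r) ^ 2 := by
  have hdiff : (√(f t) - √(f r)) ^ 2 ≤ H / 2 * (t - r) ^ 2 := by
    have := pow_le_pow_left₀ (abs_nonneg _) (abs_sqrt_sub_sqrt_le hH hderiv hnn hlip t r) 2
    rwa [sq_abs, mul_pow, sq_sqrt (by positivity), sq_abs] at this
  have hsum : (√(f t) + √(f r)) ^ 2 ≤ 2 * (f t + f r) := by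
    nlinarith [sq_sqrt (hnn t), sq_sqrt (hnn r), sq_nonneg (√(f t) - √(f r))]
  calc (f t - f r) ^ 2 = (√(f t) - √(f r)) ^ 2 * (√(f t) + √(f r)) ^ 2 := by
        rw [← mul_pow, mul_comm, ← sq_sub_sq, sq_sqrt (hnn t), sq_sqrt (hnn r)]
    _ ≤ H / 2 * (t - r) ^ 2 * (2 * (f t + f r)) :=
        mul_le_mul hdiff hsum (sq_nonneg _) (by positivity)
    _ = H * (f t + f r) * (t - r) ^ 2 := by ring

end

theorem smooth_squared_difference_bound
    (f f' : ℝ → ℝ) (H : ℝ) (hH : 0 ≤ H)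
    (hderiv : ∀ t, HasDerivAt f (f' t) t)
    (hnn : ∀ t, 0 ≤ f t)
    (hlip : ∀ t s, |f' t - f' s| ≤ H * |t - s|) :
    ∀ t r, (f t - f r) ^ 2 ≤ 6 * H * (f t + f r) * (t - r) ^ 2 := by
  intro t r
  have hsum : 0 ≤ f t + f r := add_nonneg (hnn t) (hnn r)
  calc (f t - f r) ^ 2 ≤ H * (f t + f r) * (t - r) ^ 2 :=
        sq_sub_le_mul_add_mul_sq hH hderiv hnn hlip t r
    _ ≤ 6 * H * (f t + f r) * (t - r) ^ 2 := by gcongr; linarith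
end

section
/- Let f be a nonnegative H-smooth function on a real normed vector space W (i.e., f is differentiable and its gradient/Fréchet derivative is H-Lipschitz in the dual norm). Then for every w ∈ W, ‖∇f(w)‖_* ≤ √(4 H f(w)). -/
/-!
By the mean value inequality, an `H`-Lipschitz derivative gives the quadratic upper bound
`f (w + u) ≤ f w + f' w u + H ‖u‖²`. Since `f ≥ 0`, the quadratic `t ↦ f w + t f' w u + t² H ‖u‖²`
is nonnegative, so its discriminant is nonpositive: `(f' w u)² ≤ 4 H f(w) ‖u‖²`.
-/

open Metric

theorem norm_image_add_sub_sub_fderiv_le_of_lipschitz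
    {E F : Type*} [NormedAddCommGroup E] [NormedSpace ℝ E]
    [NormedAddCommGroup F] [NormedSpace ℝ F]
    {f : E → F} {f' : E → E →L[ℝ] F} {H : ℝ} (hH : 0 ≤ H)
    (hderiv : ∀ w, HasFDerivAt f (f' w) w)
    (hlip : ∀ w w', ‖f' w - f' w'‖ ≤ H * ‖w - w'‖) (w u : E) :
    ‖f (w + u) - f w - f' w u‖ ≤ H * ‖u‖ ^ 2 := by
  have hbound : ∀ v ∈ closedBall w ‖u‖, ‖f' v - f' w‖ ≤ H * ‖u‖ := fun v hv =>
    (hlip v w).trans (mul_le_mul_of_nonneg_left (mem_closedBall_iff_norm.mp hv) hH)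
  have hw : w ∈ closedBall w ‖u‖ := mem_closedBall_self (norm_nonneg u)
  have hwu : w + u ∈ closedBall w ‖u‖ := by simp
  simpa [sq, mul_assoc] using (convex_closedBall w ‖u‖).norm_image_sub_le_of_norm_hasFDerivWithin_le'
    (fun v _ => (hderiv v).hasFDerivWithinAt) hbound hw hwu

theorem ContinuousLinearMap.norm_le_sqrt_of_quadratic_nonneg
    {E : Type*} [NormedAddCommGroup E] [NormedSpace ℝ E]
    (φ : E →L[ℝ] ℝ) {a c : ℝ} (h : ∀ u, 0 ≤ a * ‖u‖ ^ 2 + φ u + c) :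
    ‖φ‖ ≤ Real.sqrt (4 * a * c) := by
  refine φ.opNorm_le_bound (Real.sqrt_nonneg _) fun u => ?_
  have hquad : ∀ t : ℝ, 0 ≤ (a * ‖u‖ ^ 2) * (t * t) + φ u * t + c := fun t => by
    have := h (t • u)
    rw [norm_smul, Real.norm_eq_abs, mul_pow, sq_abs, map_smul, smul_eq_mul] at this
    linarith
  have hsq : φ u ^ 2 ≤ 4 * a * c * ‖u‖ ^ 2 := by
    have := discrim_le_zero hquad
    rw [discrim] at this
    linarith
  calc ‖φ u‖ = |φ u| := Real.norm_eq_abs _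
    _ ≤ Real.sqrt (4 * a * c * ‖u‖ ^ 2) := Real.abs_le_sqrt hsq
    _ = Real.sqrt (4 * a * c) * ‖u‖ := by
      rw [Real.sqrt_mul' _ (sq_nonneg _), Real.sqrt_sq (norm_nonneg u)]

theorem smooth_self_bounding_grad
    {W : Type*} [NormedAddCommGroup W] [NormedSpace ℝ W]
    (f : W → ℝ) (f' : W → (W →L[ℝ] ℝ)) (H : ℝ) (hH : 0 ≤ H)
    (hderiv : ∀ w, HasFDerivAt f (f' w) w)
    (hnn : ∀ w, 0 ≤ f w)
    (hlip : ∀ w w', ‖f' w - f' w'‖ ≤ H * ‖w - w'‖) :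
    ∀ w, ‖f' w‖ ≤ Real.sqrt (4 * H * f w) := by
  intro w
  refine (f' w).norm_le_sqrt_of_quadratic_nonneg fun u => ?_
  have hupper := norm_image_add_sub_sub_fderiv_le_of_lipschitz hH hderiv hlip w u
  rw [Real.norm_eq_abs] at hupper
  linarith [hnn (w + u), le_abs_self (f (w + u) - f w - f' w u)]
end

section
/- Let ℓ : W × Z → ℝ be nonnegative and H-smooth in w (gradient H-Lipschitz in dual norm, and ‖∇ℓ(w,z)‖_* ≤ √(4Hℓ(w,z))). Suppose ŵ and ŵ' are minimizers of two λ-strongly convex regularized empirical objectives that differ only in one of n data points. Then ‖ŵ' - ŵ‖ ≤ (4√H / (λn)) (√(ℓ(ŵ', z_i)) + √(ℓ(ŵ, z_i'))), where z_i and z_i' are the differing data points. -/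
/-!
Quadratic growth of a strongly convex objective around its minimizer gives
`λ/4 ‖ŵ' - ŵ‖² ≤ L̂_λ(ŵ') - L̂_λ(ŵ)` and the same with the roles swapped. Adding the two, the
regularizer and all shared data terms cancel, leaving `1/n` times the change of the loss on
`z_i` and on `z_i'` between `ŵ` and `ŵ'`. By the first-order condition for convex functions
each change is at most `‖∇ℓ‖_* ‖ŵ' - ŵ‖ ≤ 2√H √ℓ ‖ŵ' - ŵ‖`, and dividing by `‖ŵ' - ŵ‖` gives
the bound.
-/

open Set

section

variable {E : Type*} [NormedAddCommGroup E] [NormedSpace ℝ E] {s : Set E} {f : E → ℝ}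
  {x y : E}

theorem strongConvexOn_iff_forall {m : ℝ} :
    StrongConvexOn s m f ↔ Convex ℝ s ∧ ∀ u ∈ s, ∀ v ∈ s, ∀ a b : ℝ, 0 ≤ a → 0 ≤ b → a + b = 1 →
      f (a • u + b • v) ≤ a * f u + b * f v - a * b * (m / 2) * ‖u - v‖ ^ 2 := by
  simp only [StrongConvexOn, UniformConvexOn, smul_eq_mul, mul_assoc]

/-- Comparing with the midpoint gives the constant `m / 4` rather than the optimal `m / 2`; the
stated stability bound is calibrated to it. -/
theorem StrongConvexOn.add_sq_le_of_isMinOn {m : ℝ} (hf : StrongConvexOn s m f)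
    (hxs : x ∈ s) (hx : IsMinOn f s x) (hy : y ∈ s) : f x + m / 4 * ‖y - x‖ ^ 2 ≤ f y := by
  have hmid : f x ≤ f ((1 / 2 : ℝ) • x + (1 / 2 : ℝ) • y) :=
    hx (hf.1 hxs hy (by norm_num) (by norm_num) (by norm_num))
  have := hf.2 hxs hy (by norm_num : (0 : ℝ) ≤ 1 / 2) (by norm_num : (0 : ℝ) ≤ 1 / 2)
    (by norm_num)
  rw [norm_sub_rev] at this
  simp only [smul_eq_mul] at this
  linarith

theorem ConvexOn.add_fderiv_le {f' : E →L[ℝ] ℝ} (hf : ConvexOn ℝ s f) (hx : x ∈ s) (hy : y ∈ s)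
    (hd : HasFDerivAt f f' x) : f x + f' (y - x) ≤ f y := by
  let γ : ℝ →ᵃ[ℝ] E := AffineMap.lineMap x y
  have hγ : ConvexOn ℝ (Icc 0 1) (f ∘ γ) :=
    (hf.comp_affineMap γ).subset (fun _ ht ↦ hf.1.lineMap_mem hx hy ht) (convex_Icc 0 1)
  have hγ' : HasDerivAt (f ∘ γ) (f' (y - x)) 0 := by
    have := AffineMap.lineMap_apply_zero (k := ℝ) x y
    exact (this ▸ hd).comp_hasDerivAt 0 AffineMap.hasDerivAt_lineMap
  have := hγ.le_slope_of_hasDerivAt (left_mem_Icc.2 zero_le_one) (right_mem_Icc.2 zero_le_one)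
    zero_lt_one hγ'
  simp only [slope_def_field, Function.comp_apply, γ, AffineMap.lineMap_apply_zero,
    AffineMap.lineMap_apply_one, sub_zero, div_one] at this
  linarith

theorem ConvexOn.sub_le_of_norm_fderiv_le_sqrt {f' : E →L[ℝ] ℝ} {H : ℝ} (hf : ConvexOn ℝ s f)
    (hx : x ∈ s) (hy : y ∈ s) (hd : HasFDerivAt f f' x) (hfx : 0 ≤ f x)
    (hf' : ‖f'‖ ≤ √(4 * H * f x)) : f x - f y ≤ 2 * √H * √(f x) * ‖x - y‖ :=
  calc f x - f y ≤ f' (x - y) := by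
        have := hf.add_fderiv_le hx hy hd
        rw [← neg_sub, map_neg] at this
        linarith
    _ ≤ ‖f'‖ * ‖x - y‖ := (Real.le_norm_self _).trans (f'.le_opNorm _)
    _ ≤ √(4 * H * f x) * ‖x - y‖ := by gcongr
    _ = 2 * √H * √(f x) * ‖x - y‖ := by
        rw [Real.sqrt_mul' _ hfx, Real.sqrt_mul zero_le_four, show (4 : ℝ) = 2 ^ 2 by norm_num,
          Real.sqrt_sq zero_le_two]

end

theorem Fintype.sum_apply_update {ι α M : Type*} [Fintype ι] [DecidableEq ι] [AddCommGroup M]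
    (f : α → M) (z : ι → α) (i : ι) (a : α) :
    ∑ j, f (Function.update z i a j) = ∑ j, f (z j) - f (z i) + f a := by
  have hcomp : (fun j ↦ f (Function.update z i a j)) = Function.update (f ∘ z) i (f a) :=
    Function.comp_update f z i a
  rw [hcomp, Finset.sum_update_of_mem (Finset.mem_univ i),
    Finset.sum_eq_add_sum_sdiff_singleton_of_mem (Finset.mem_univ i) (fun j ↦ f (z j))]
  simp only [Function.comp_apply]
  abel

theorem le_div_of_mul_sq_le_mul {a b d : ℝ} (ha : 0 < a) (hb : 0 ≤ b) (h : a * d ^ 2 ≤ b * d) :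
    d ≤ b / a := by
  rw [le_div_iff₀ ha]
  nlinarith

theorem regularized_erm_stability_distance_general
    {V : Type*} [NormedAddCommGroup V] [NormedSpace ℝ V] {Z : Type*}
    (W : Set V) (hW : Convex ℝ W)
    (ℓ : V → Z → ℝ) (g : V → Z → (V →L[ℝ] ℝ)) (F : V → ℝ)
    (H lam : ℝ) (hlam : 0 < lam)
    (n : ℕ) (z : Fin n → Z) (z' : Z) (i : Fin n)
    (hnn : ∀ w zz, 0 ≤ ℓ w zz)
    (hconv : ∀ zz, ConvexOn ℝ W (fun w => ℓ w zz))
    (hderiv : ∀ w zz, HasFDerivAt (fun v => ℓ v zz) (g w zz) w)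
    (hgrad : ∀ w zz, ‖g w zz‖ ≤ Real.sqrt (4 * H * ℓ w zz))
    -- the two regularized empirical objectives, differing only in the i-th point
    (Lhat Lhat' : V → ℝ)
    (hL : ∀ w, Lhat w = (1 / (n : ℝ)) * ∑ j, ℓ w (z j) + lam * F w)
    (hL' : ∀ w, Lhat' w = (1 / (n : ℝ)) * ∑ j, ℓ w (Function.update z i z' j) + lam * F w)
    -- λ-strong convexity of both objectives w.r.t. the norm
    (hscL : ∀ u ∈ W, ∀ v ∈ W, ∀ a b : ℝ, 0 ≤ a → 0 ≤ b → a + b = 1 →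
      Lhat (a • u + b • v) ≤ a * Lhat u + b * Lhat v - a * b * (lam / 2) * ‖u - v‖ ^ 2)
    (hscL' : ∀ u ∈ W, ∀ v ∈ W, ∀ a b : ℝ, 0 ≤ a → 0 ≤ b → a + b = 1 →
      Lhat' (a • u + b • v) ≤ a * Lhat' u + b * Lhat' v - a * b * (lam / 2) * ‖u - v‖ ^ 2)
    -- the minimizers
    (what what' : V) (hwhatW : what ∈ W) (hwhat'W : what' ∈ W)
    (hmin : ∀ w ∈ W, Lhat what ≤ Lhat w)
    (hmin' : ∀ w ∈ W, Lhat' what' ≤ Lhat' w) :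
    ‖what' - what‖ ≤ (4 * Real.sqrt H / (lam * n)) *
      (Real.sqrt (ℓ what' (z i)) + Real.sqrt (ℓ what z')) := by
  have hgrowth := (strongConvexOn_iff_forall.2 ⟨hW, hscL⟩).add_sq_le_of_isMinOn hwhatW
    (isMinOn_iff.2 hmin) hwhat'W
  have hgrowth' := (strongConvexOn_iff_forall.2 ⟨hW, hscL'⟩).add_sq_le_of_isMinOn hwhat'W
    (isMinOn_iff.2 hmin') hwhatW
  rw [norm_sub_rev] at hgrowth'
  have hlip := (hconv (z i)).sub_le_of_norm_fderiv_le_sqrt hwhat'W hwhatW (hderiv what' (z i))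
    (hnn _ _) (hgrad _ _)
  have hlip' := (hconv z').sub_le_of_norm_fderiv_le_sqrt hwhatW hwhat'W (hderiv what z')
    (hnn _ _) (hgrad _ _)
  rw [norm_sub_rev] at hlip'
  have hgap : lam / 2 * ‖what' - what‖ ^ 2 ≤ (1 / (n : ℝ)) *
      ((ℓ what' (z i) - ℓ what (z i)) + (ℓ what z' - ℓ what' z')) := by
    rw [hL, hL] at hgrowth
    rw [hL', hL', Fintype.sum_apply_update, Fintype.sum_apply_update] at hgrowth'
    linarith
  have hkey : lam / 2 * ‖what' - what‖ ^ 2 ≤ (1 / (n : ℝ)) * (2 * √H *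
      (√(ℓ what' (z i)) + √(ℓ what z'))) * ‖what' - what‖ := by
    refine hgap.trans ?_
    rw [mul_assoc]
    gcongr
    linarith
  refine (le_div_of_mul_sq_le_mul (by positivity) (by positivity) hkey).trans_eq ?_
  ring

theorem regularized_erm_stability_distance
    {V : Type*} [NormedAddCommGroup V] [NormedSpace ℝ V] {Z : Type*}
    (W : Set V) (hW : Convex ℝ W)
    (ℓ : V → Z → ℝ) (g : V → Z → (V →L[ℝ] ℝ)) (F : V → ℝ)
    (H lam : ℝ) (hH : 0 ≤ H) (hlam : 0 < lam)
    (n : ℕ) (hn : 0 < n) (z : Fin n → Z) (z' : Z) (i : Fin n)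
    (hnn : ∀ w zz, 0 ≤ ℓ w zz)
    (hconv : ∀ zz, ConvexOn ℝ W (fun w => ℓ w zz))
    (hderiv : ∀ w zz, HasFDerivAt (fun v => ℓ v zz) (g w zz) w)
    (hgrad : ∀ w zz, ‖g w zz‖ ≤ Real.sqrt (4 * H * ℓ w zz))
    -- the two regularized empirical objectives, differing only in the i-th point
    (Lhat Lhat' : V → ℝ)
    (hL : ∀ w, Lhat w = (1 / (n : ℝ)) * ∑ j, ℓ w (z j) + lam * F w)
    (hL' : ∀ w, Lhat' w = (1 / (n : ℝ)) * ∑ j, ℓ w (Function.update z i z' j) + lam * F w)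
    -- λ-strong convexity of both objectives w.r.t. the norm
    (hscL : ∀ u ∈ W, ∀ v ∈ W, ∀ a b : ℝ, 0 ≤ a → 0 ≤ b → a + b = 1 →
      Lhat (a • u + b • v) ≤ a * Lhat u + b * Lhat v - a * b * (lam / 2) * ‖u - v‖ ^ 2)
    (hscL' : ∀ u ∈ W, ∀ v ∈ W, ∀ a b : ℝ, 0 ≤ a → 0 ≤ b → a + b = 1 →
      Lhat' (a • u + b • v) ≤ a * Lhat' u + b * Lhat' v - a * b * (lam / 2) * ‖u - v‖ ^ 2)
    -- the minimizers
    (what what' : V) (hwhatW : what ∈ W) (hwhat'W : what' ∈ W)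
    (hmin : ∀ w ∈ W, Lhat what ≤ Lhat w)
    (hmin' : ∀ w ∈ W, Lhat' what' ≤ Lhat' w) :
    ‖what' - what‖ ≤ (4 * Real.sqrt H / (lam * n)) *
      (Real.sqrt (ℓ what' (z i)) + Real.sqrt (ℓ what z')) :=
  regularized_erm_stability_distance_general W hW ℓ g F H lam hlam n z z' i hnn hconv hderiv hgrad
    Lhat Lhat' hL hL' hscL hscL' what what' hwhatW hwhat'W hmin hmin'
end

section
/- Under the stability setup, for a nonnegative H-smooth-in-w loss ℓ: ℓ(ŵ', z_i) - ℓ(ŵ, z_i) ≤ (16H/(λn)) (ℓ(ŵ', z_i) + ℓ(ŵ, z_i')), where ŵ, ŵ' are the regularized empirical minimizers on a sample and its one-point perturbation. -/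
theorem grad_ineq_aux {V : Type*} [NormedAddCommGroup V] [NormedSpace ℝ V]
    (W : Set V) (hW : Convex ℝ W) (f : V → ℝ) (G : V →L[ℝ] ℝ)
    (hconv : ConvexOn ℝ W f) (x y : V) (hx : x ∈ W) (hy : y ∈ W)
    (hd : HasFDerivAt f G x) : f x - f y ≤ G (x - y) := by
  set c : ℝ → V := fun t => x + t • (y - x) with hc
  have hmem : ∀ t ∈ Set.Icc (0:ℝ) 1, c t ∈ W := by
    intro t ht
    have : c t = (1 - t) • x + t • y := by
      simp only [hc]; module
    rw [this]
    exact hW hx hy (by linarith [ht.2]) ht.1 (by ring)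
  have hφ : ConvexOn ℝ (Set.Icc (0:ℝ) 1) (f ∘ c) := by
    constructor
    · exact convex_Icc 0 1
    · intro s hs t ht a b ha hb hab
      have key : c (a * s + b * t) = a • c s + b • c t := by
        simp only [hc]
        have : a • (x + s • (y - x)) + b • (x + t • (y - x))
            = (a + b) • x + (a * s + b * t) • (y - x) := by module
        rw [this, hab, one_smul]
      simp only [Function.comp_apply, smul_eq_mul]
      rw [key]
      exact hconv.2 (hmem s hs) (hmem t ht) ha hb hab
  have hcurve : HasDerivAt c (y - x) 0 := by
    have : HasDerivAt (fun t : ℝ => t • (y - x)) ((1:ℝ) • (y - x)) 0 :=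
      (hasDerivAt_id (0:ℝ)).smul_const (y - x)
    simpa [hc] using this.const_add x
  have hc0 : c 0 = x := by simp [hc]
  have hd' : HasDerivAt (f ∘ c) (G (y - x)) 0 := by
    have := (hc0 ▸ hd).comp_hasDerivAt 0 hcurve
    simpa using this
  have := hφ.le_slope_of_hasDerivAt (by simp) (by norm_num : (1:ℝ) ∈ Set.Icc (0:ℝ) 1)
    one_pos hd'
  rw [slope_def_field] at this
  simp only [Function.comp_apply, hc0] at this
  have hc1 : c 1 = y := by simp [hc]
  rw [hc1] at this
  have : G (y - x) ≤ f y - f x := by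
    simpa [div_one] using this
  have hGneg : G (x - y) = - G (y - x) := by
    rw [← map_neg, neg_sub]
  linarith [hGneg ▸ neg_le_neg this]

theorem regularized_erm_stability_loss
    {V : Type*} [NormedAddCommGroup V] [NormedSpace ℝ V] {Z : Type*}
    (W : Set V) (hW : Convex ℝ W)
    (ℓ : V → Z → ℝ) (g : V → Z → (V →L[ℝ] ℝ)) (F : V → ℝ)
    (H lam : ℝ) (hH : 0 ≤ H) (hlam : 0 < lam)
    (n : ℕ) (hn : 0 < n) (z : Fin n → Z) (z' : Z) (i : Fin n)
    (hnn : ∀ w zz, 0 ≤ ℓ w zz)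
    (hconv : ∀ zz, ConvexOn ℝ W (fun w => ℓ w zz))
    (hderiv : ∀ w zz, HasFDerivAt (fun v => ℓ v zz) (g w zz) w)
    (hgrad : ∀ w zz, ‖g w zz‖ ≤ Real.sqrt (4 * H * ℓ w zz))
    (Lhat Lhat' : V → ℝ)
    (hL : ∀ w, Lhat w = (1 / (n : ℝ)) * ∑ j, ℓ w (z j) + lam * F w)
    (hL' : ∀ w, Lhat' w = (1 / (n : ℝ)) * ∑ j, ℓ w (Function.update z i z' j) + lam * F w)
    (hscL : ∀ u ∈ W, ∀ v ∈ W, ∀ a b : ℝ, 0 ≤ a → 0 ≤ b → a + b = 1 →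
      Lhat (a • u + b • v) ≤ a * Lhat u + b * Lhat v - a * b * (lam / 2) * ‖u - v‖ ^ 2)
    (hscL' : ∀ u ∈ W, ∀ v ∈ W, ∀ a b : ℝ, 0 ≤ a → 0 ≤ b → a + b = 1 →
      Lhat' (a • u + b • v) ≤ a * Lhat' u + b * Lhat' v - a * b * (lam / 2) * ‖u - v‖ ^ 2)
    (what what' : V) (hwhatW : what ∈ W) (hwhat'W : what' ∈ W)
    (hmin : ∀ w ∈ W, Lhat what ≤ Lhat w)
    (hmin' : ∀ w ∈ W, Lhat' what' ≤ Lhat' w)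
    (hdist : ‖what' - what‖ ≤ (4 * Real.sqrt H / (lam * n)) *
      (Real.sqrt (ℓ what' (z i)) + Real.sqrt (ℓ what z'))) :
    ℓ what' (z i) - ℓ what (z i) ≤
      (16 * H / (lam * n)) * (ℓ what' (z i) + ℓ what z') := by
  have key := grad_ineq_aux W hW (fun v => ℓ v (z i)) (g what' (z i)) (hconv (z i))
    what' what hwhat'W hwhatW (hderiv what' (z i))
  set a := Real.sqrt (ℓ what' (z i)) with haa
  set b := Real.sqrt (ℓ what z') with hbb
  set s := Real.sqrt H with hss
  have ha0 : 0 ≤ a := Real.sqrt_nonneg _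
  have hb0 : 0 ≤ b := Real.sqrt_nonneg _
  have hs0 : 0 ≤ s := Real.sqrt_nonneg _
  have ha2 : a ^ 2 = ℓ what' (z i) := Real.sq_sqrt (hnn _ _)
  have hb2 : b ^ 2 = ℓ what z' := Real.sq_sqrt (hnn _ _)
  have hs2 : s ^ 2 = H := Real.sq_sqrt hH
  have hpos : (0:ℝ) < lam * n := by positivity
  have hgnorm : ‖g what' (z i)‖ ≤ 2 * s * a := by
    have h4 : Real.sqrt (4 * H * ℓ what' (z i)) = 2 * s * a := by
      rw [Real.sqrt_mul (by positivity), Real.sqrt_mul (by norm_num : (0:ℝ) ≤ 4), haa, hss]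
      rw [show (4:ℝ) = 2^2 by norm_num, Real.sqrt_sq (by norm_num : (0:ℝ) ≤ 2)]
    exact h4 ▸ hgrad what' (z i)
  have happ : (g what' (z i)) (what' - what) ≤ ‖g what' (z i)‖ * ‖what' - what‖ :=
    le_trans (le_abs_self _) ((g what' (z i)).le_opNorm _)
  have h1 : ℓ what' (z i) - ℓ what (z i) ≤ (2 * s * a) * ((4 * s / (lam * n)) * (a + b)) := by
    calc ℓ what' (z i) - ℓ what (z i) ≤ (g what' (z i)) (what' - what) := key
    _ ≤ ‖g what' (z i)‖ * ‖what' - what‖ := happ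
    _ ≤ (2 * s * a) * ((4 * s / (lam * n)) * (a + b)) := by
        apply mul_le_mul hgnorm hdist (norm_nonneg _) (by positivity)
  set t := 1 / (lam * n) with htt
  have ht0 : 0 ≤ t := by positivity
  have heq1 : 4 * s / (lam * n) = 4 * s * t := by rw [htt]; ring
  have heq2 : 16 * H / (lam * n) = 16 * H * t := by rw [htt]; ring
  rw [heq1, ← ha2] at h1
  rw [heq2, ← ha2, ← hb2, ← hs2]
  nlinarith [h1, mul_nonneg (mul_nonneg ht0 (mul_nonneg hs0 hs0)) (sq_nonneg (a - b)),
    mul_nonneg (mul_nonneg ht0 (mul_nonneg hs0 hs0)) (sq_nonneg b),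
    mul_nonneg (mul_nonneg ht0 (mul_nonneg hs0 hs0)) (sq_nonneg a)]
end

section
/- Let h : X → ℝ range over a class H and let φ(·, y) be nonnegative and H-smooth for each y, satisfying (φ(t,y) - φ(s,y))² ≤ 6H(φ(t,y) + φ(s,y))(t-s)². Fix points (z₁,…,z_n) and functions h, h_ε with (1/n)Σᵢφ(h(zᵢ),zᵢ) ≤ r and (1/n)Σᵢφ(h_ε(zᵢ),zᵢ) ≤ r. Then √((1/n)Σᵢ(φ(h(zᵢ),zᵢ) - φ(h_ε(zᵢ),zᵢ))²) ≤ √(12Hr)·maxᵢ|h(zᵢ) - h_ε(zᵢ)|. -/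
theorem restricted_loss_l2_cover_bound
    {Z : Type*} (n : ℕ) (hn : 0 < n) (H r : ℝ) (hH : 0 ≤ H) (hr : 0 ≤ r)
    (φ : ℝ → Z → ℝ)
    (hnn : ∀ t z, 0 ≤ φ t z)
    (hsb : ∀ t s : ℝ, ∀ z : Z,
      (φ t z - φ s z) ^ 2 ≤ 6 * H * (φ t z + φ s z) * (t - s) ^ 2)
    (z : Fin n → Z) (h hε : Z → ℝ)
    (hLh : (1 / (n : ℝ)) * ∑ i, φ (h (z i)) (z i) ≤ r)
    (hLhε : (1 / (n : ℝ)) * ∑ i, φ (hε (z i)) (z i) ≤ r) :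
    Real.sqrt ((1 / (n : ℝ)) * ∑ i, (φ (h (z i)) (z i) - φ (hε (z i)) (z i)) ^ 2)
      ≤ Real.sqrt (12 * H * r) *
        (Finset.univ.sup' (Finset.univ_nonempty_iff.2 ⟨⟨0, hn⟩⟩)
          (fun i => |h (z i) - hε (z i)|)) := by
  set ne : (Finset.univ : Finset (Fin n)).Nonempty :=
    Finset.univ_nonempty_iff.2 ⟨⟨0, hn⟩⟩
  set M := Finset.univ.sup' ne (fun i => |h (z i) - hε (z i)|) with hM
  have hM0 : 0 ≤ M := by
    refine le_trans (abs_nonneg (h (z ⟨0, hn⟩) - hε (z ⟨0, hn⟩))) ?_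
    exact Finset.le_sup' (fun i => |h (z i) - hε (z i)|) (Finset.mem_univ ⟨0, hn⟩)
  have hn0 : (0:ℝ) < (n:ℝ) := by exact_mod_cast hn
  have key : (1 / (n : ℝ)) * ∑ i, (φ (h (z i)) (z i) - φ (hε (z i)) (z i)) ^ 2
      ≤ 12 * H * r * M ^ 2 := by
    have hterm : ∀ i : Fin n, (φ (h (z i)) (z i) - φ (hε (z i)) (z i)) ^ 2
        ≤ 6 * H * (φ (h (z i)) (z i) + φ (hε (z i)) (z i)) * M ^ 2 := by
      intro i
      refine le_trans (hsb _ _ _) ?_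
      have h1 : (h (z i) - hε (z i)) ^ 2 ≤ M ^ 2 := by
        have := Finset.le_sup' (fun i => |h (z i) - hε (z i)|) (Finset.mem_univ i)
        calc (h (z i) - hε (z i)) ^ 2 = |h (z i) - hε (z i)| ^ 2 := (sq_abs _).symm
          _ ≤ M ^ 2 := by nlinarith [abs_nonneg (h (z i) - hε (z i))]
      have h2 : 0 ≤ 6 * H * (φ (h (z i)) (z i) + φ (hε (z i)) (z i)) := by
        have := hnn (h (z i)) (z i); have := hnn (hε (z i)) (z i); nlinarith
      exact mul_le_mul_of_nonneg_left h1 h2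
    have hsum : ∑ i, (φ (h (z i)) (z i) - φ (hε (z i)) (z i)) ^ 2
        ≤ 6 * H * M ^ 2 * ((∑ i, φ (h (z i)) (z i)) + ∑ i, φ (hε (z i)) (z i)) := by
      calc ∑ i, (φ (h (z i)) (z i) - φ (hε (z i)) (z i)) ^ 2
          ≤ ∑ i, 6 * H * (φ (h (z i)) (z i) + φ (hε (z i)) (z i)) * M ^ 2 :=
            Finset.sum_le_sum fun i _ => hterm i
        _ = 6 * H * M ^ 2 * ((∑ i, φ (h (z i)) (z i)) + ∑ i, φ (hε (z i)) (z i)) := by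
            rw [← Finset.sum_add_distrib]; rw [Finset.mul_sum]; congr 1; ext i; ring
    have := mul_le_mul_of_nonneg_left hsum (le_of_lt (one_div_pos.2 hn0))
    calc (1 / (n : ℝ)) * ∑ i, (φ (h (z i)) (z i) - φ (hε (z i)) (z i)) ^ 2
        ≤ (1 / (n : ℝ)) * (6 * H * M ^ 2 *
            ((∑ i, φ (h (z i)) (z i)) + ∑ i, φ (hε (z i)) (z i))) := this
      _ = 6 * H * M ^ 2 * ((1 / (n : ℝ)) * ∑ i, φ (h (z i)) (z i)
            + (1 / (n : ℝ)) * ∑ i, φ (hε (z i)) (z i)) := by ring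
      _ ≤ 6 * H * M ^ 2 * (r + r) := by
          apply mul_le_mul_of_nonneg_left (add_le_add hLh hLhε)
          positivity
      _ = 12 * H * r * M ^ 2 := by ring
  calc Real.sqrt ((1 / (n : ℝ)) * ∑ i, (φ (h (z i)) (z i) - φ (hε (z i)) (z i)) ^ 2)
      ≤ Real.sqrt (12 * H * r * M ^ 2) := Real.sqrt_le_sqrt key
    _ = Real.sqrt (12 * H * r) * M := by
        rw [Real.sqrt_mul (by positivity), Real.sqrt_sq hM0]
end
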